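/- Let n and k be positive integers with k ≤ n and n ≡ k (mod 2). Then every integer y satisfying F_n + F_{n−2} + F_{n−4} + ⋯ + F_k ≤ y < F_{n+1} has at least (n − k)/2 + 1 summands in its Zeckendorf decomposition, i.e., s(y) ≥ (n − k)/2 + 1. Consequently, for n ≥ 3, every integer m with F_{2n} + F_n + F_{n−2} + ⋯ + F_k ≤ m < F_{2n} + F_{n+1} satisfies s(m) ≥ (n − k)/2 + 2. -/

import Mathlib

open Filter MeasureTheory

/-- Fibonacci numbers normalized so that `F 1 = 1`, `F 2 = 2`. -/
def F (n : ℕ) : ℕ := Nat.fib (n + 1)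

/-- `a` is the (unique) system of Zeckendorf digits: `a m j` is the `j`-th digit of `m`,
digits are `0` or `1`, indexed from `1`, no two consecutive digits are `1`,
digits vanish above `m`, and the digits decompose `m`. -/
def IsZeckendorf (a : ℕ → ℕ → ℕ) : Prop :=
  ∀ m : ℕ,
    a m 0 = 0 ∧
    (∀ j, a m j ≤ 1) ∧
    (∀ j, ¬(a m j = 1 ∧ a m (j + 1) = 1)) ∧
    (∀ j, m < j → a m j = 0) ∧
    m = ∑ j ∈ Finset.Icc 1 m, a m j * F j

/-- Number of summands in the Zeckendorf decomposition of `m`. -/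
def s (a : ℕ → ℕ → ℕ) (m : ℕ) : ℕ := ∑ j ∈ Finset.Icc 1 m, a m j

/-!
A `0/1` digit string with no two adjacent ones and `c` ones among positions `≤ N` has value at
most `F N + F (N - 2) + ⋯` (`c` terms): the top one sits at position `≤ N`, the next at `≤ N - 2`,
and so on. For `n = k + 2t` and `t` ones this bound is `F n + ⋯ + F (k + 2)`, which is smaller than
the tail sum `F n + ⋯ + F k`; and a value below `F (n + 1)` has no digits above position `n`.
For the second claim, `F (2n) ≤ m < F (2n) + F (n + 1) ≤ F (2n + 1)` forces the digit `F (2n)` of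
`m`, and the remaining digits encode `m - F (2n)`, to which the first claim applies.
-/

open Finset

lemma F_pos (n : ℕ) : 0 < F n := Nat.fib_pos.mpr n.succ_pos

lemma F_mono {m n : ℕ} (h : m ≤ n) : F m ≤ F n := Nat.fib_mono (Nat.succ_le_succ h)

lemma F_add_two (n : ℕ) : F (n + 2) = F n + F (n + 1) := Nat.fib_add_two

lemma F_one : F 1 = 1 := rfl

lemma F_two : F 2 = 2 := rfl

def fibSkipSum (N c : ℕ) : ℕ := ∑ i ∈ range c, F (N - 2 * i)

lemma fibSkipSum_mono_right (N : ℕ) {c c' : ℕ} (h : c ≤ c') : fibSkipSum N c ≤ fibSkipSum N c' :=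
  sum_le_sum_of_subset (range_subset_range.mpr h)

lemma fibSkipSum_mono_left {N N' : ℕ} (h : N ≤ N') (c : ℕ) : fibSkipSum N c ≤ fibSkipSum N' c :=
  sum_le_sum fun _ _ => F_mono (by omega)

lemma fibSkipSum_add_two (N c : ℕ) : fibSkipSum (N + 2) (c + 1) = F (N + 2) + fibSkipSum N c := by
  rw [fibSkipSum, sum_range_succ', add_comm]
  congr 1
  exact sum_congr rfl fun i _ => congrArg F (by omega)

lemma sum_range_F_eq_fibSkipSum_add (k t : ℕ) :
    ∑ i ∈ range (t + 1), F (k + 2 * i) = fibSkipSum (k + 2 * t) t + F k := by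
  rw [← sum_range_reflect, sum_range_succ, fibSkipSum]
  congr 1
  · exact sum_congr rfl fun i hi => congrArg F (by simp only [mem_range] at hi; omega)
  · simp

structure ZeckendorfDigits (b : ℕ → ℕ) : Prop where
  le_one : ∀ j, b j ≤ 1
  not_consecutive : ∀ j, ¬(b j = 1 ∧ b (j + 1) = 1)

def digitValue (b : ℕ → ℕ) (N : ℕ) : ℕ := ∑ j ∈ Icc 1 N, b j * F j

def digitCount (b : ℕ → ℕ) (N : ℕ) : ℕ := ∑ j ∈ Icc 1 N, b j

section digits

variable {b : ℕ → ℕ}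

lemma digitValue_one : digitValue b 1 = b 1 := by simp [digitValue, F_one]

lemma digitCount_one : digitCount b 1 = b 1 := by simp [digitCount]

lemma digitValue_succ (N : ℕ) : digitValue b (N + 1) = digitValue b N + b (N + 1) * F (N + 1) :=
  sum_Icc_succ_top (by omega) _

lemma digitCount_succ (N : ℕ) : digitCount b (N + 1) = digitCount b N + b (N + 1) :=
  sum_Icc_succ_top (by omega) _

lemma digitValue_eq_of_eq_zero {n N : ℕ} (h : n ≤ N) (hz : ∀ j, n < j → j ≤ N → b j = 0) :
    digitValue b N = digitValue b n := by
  refine (sum_subset (Icc_subset_Icc_right h) fun j hj hjn => ?_).symm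
  simp only [mem_Icc, not_and, not_le] at hj hjn
  rw [hz j (hjn hj.1) hj.2, zero_mul]

lemma digitCount_eq_of_eq_zero {n N : ℕ} (h : n ≤ N) (hz : ∀ j, n < j → j ≤ N → b j = 0) :
    digitCount b N = digitCount b n := by
  refine (sum_subset (Icc_subset_Icc_right h) fun j hj hjn => ?_).symm
  simp only [mem_Icc, not_and, not_le] at hj hjn
  exact hz j (hjn hj.1) hj.2

lemma eq_zero_of_digitValue_lt {n N j : ℕ} (hlt : digitValue b N < F (n + 1)) (hj : n < j)
    (hjN : j ≤ N) : b j = 0 := by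
  by_contra hne
  have hterm : b j * F j ≤ digitValue b N :=
    single_le_sum (f := fun j => b j * F j) (fun _ _ => Nat.zero_le _) (mem_Icc.mpr ⟨by omega, hjN⟩)
  have : F (n + 1) ≤ b j * F j := (F_mono hj).trans (Nat.le_mul_of_pos_left _ (by omega))
  omega

lemma digitValue_eq_and_digitCount_eq_of_lt {n N : ℕ} (h : n ≤ N)
    (hlt : digitValue b N < F (n + 1)) :
    digitValue b N = digitValue b n ∧ digitCount b N = digitCount b n :=
  ⟨digitValue_eq_of_eq_zero h fun _ hj hjN => eq_zero_of_digitValue_lt hlt hj hjN,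
    digitCount_eq_of_eq_zero h fun _ hj hjN => eq_zero_of_digitValue_lt hlt hj hjN⟩

namespace ZeckendorfDigits

variable (hb : ZeckendorfDigits b)
include hb

lemma eq_zero_or_eq_one (j : ℕ) : b j = 0 ∨ b j = 1 :=
  Nat.le_one_iff_eq_zero_or_eq_one.mp (hb.le_one j)

lemma eq_zero_of_succ_eq_one {j : ℕ} (h : b (j + 1) = 1) : b j = 0 :=
  (hb.eq_zero_or_eq_one j).resolve_right fun h' => hb.not_consecutive j ⟨h', h⟩

lemma digitValue_add_two_of_eq_one {N : ℕ} (h : b (N + 2) = 1) :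
    digitValue b (N + 2) = digitValue b N + F (N + 2) ∧
      digitCount b (N + 2) = digitCount b N + 1 := by
  have h₀ := hb.eq_zero_of_succ_eq_one h
  rw [digitValue_succ (N + 1), digitValue_succ N, digitCount_succ (N + 1), digitCount_succ N, h, h₀]
  simp

lemma digitValue_lt (N : ℕ) : digitValue b N < F (N + 1) := by
  induction N using Nat.twoStepInduction with
  | zero => exact F_pos 1
  | one =>
    rw [digitValue_one, F_two]
    exact Nat.lt_succ_of_le (hb.le_one 1)
  | more N ih₀ ih₁ =>
    rw [F_add_two]
    rcases hb.eq_zero_or_eq_one (N + 2) with h | h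
    · rw [digitValue_succ, h, zero_mul, add_zero]
      omega
    · rw [(hb.digitValue_add_two_of_eq_one h).1, F_add_two]
      omega

lemma digitValue_le_fibSkipSum (N : ℕ) :
    ∀ c, digitCount b N ≤ c → digitValue b N ≤ fibSkipSum N c := by
  induction N using Nat.twoStepInduction with
  | zero => intro c _; exact Nat.zero_le _
  | one =>
    intro c hc
    rw [digitCount_one] at hc
    rw [digitValue_one]
    obtain _ | c := c
    · exact hc
    · calc b 1 ≤ F 1 := hb.le_one 1
        _ ≤ fibSkipSum 1 (c + 1) := single_le_sum (f := fun i => F (1 - 2 * i))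
            (fun _ _ => Nat.zero_le _) (mem_range.mpr c.succ_pos)
  | more N ih₀ ih₁ =>
    intro c hc
    rcases hb.eq_zero_or_eq_one (N + 2) with h | h
    · rw [digitCount_succ, h, add_zero] at hc
      rw [digitValue_succ, h, zero_mul, add_zero]
      exact (ih₁ c hc).trans (fibSkipSum_mono_left (by omega) c)
    · obtain ⟨hval, hcnt⟩ := hb.digitValue_add_two_of_eq_one h
      obtain ⟨c, rfl⟩ : ∃ c', c = c' + 1 := ⟨c - 1, by omega⟩
      rw [hval, fibSkipSum_add_two, add_comm]
      exact Nat.add_le_add_left (ih₀ c (by omega)) _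

lemma eq_one_of_F_le_digitValue {N : ℕ} (h : F (N + 1) ≤ digitValue b (N + 1)) : b (N + 1) = 1 :=
  (hb.eq_zero_or_eq_one (N + 1)).resolve_left fun h₀ => by
    rw [digitValue_succ, h₀, zero_mul, add_zero] at h
    exact (hb.digitValue_lt N).not_ge h

lemma digitValue_le_fibSkipSum_of_lt {n N : ℕ} (hlt : digitValue b N < F (n + 1)) :
    digitValue b N ≤ fibSkipSum n (digitCount b N) := by
  rcases le_total n N with h | h
  · obtain ⟨hval, hcnt⟩ := digitValue_eq_and_digitCount_eq_of_lt h hlt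
    rw [hval, hcnt]
    exact hb.digitValue_le_fibSkipSum n _ le_rfl
  · exact (hb.digitValue_le_fibSkipSum N _ le_rfl).trans (fibSkipSum_mono_left h _)

theorem lt_digitCount_of_sum_le {k t N : ℕ}
    (hle : ∑ i ∈ range (t + 1), F (k + 2 * i) ≤ digitValue b N)
    (hlt : digitValue b N < F (k + 2 * t + 1)) : t < digitCount b N := by
  by_contra! hcount
  refine (?_ : digitValue b N < _).not_ge hle
  calc digitValue b N ≤ fibSkipSum (k + 2 * t) (digitCount b N) :=
        hb.digitValue_le_fibSkipSum_of_lt hlt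
    _ ≤ fibSkipSum (k + 2 * t) t := fibSkipSum_mono_right _ hcount
    _ < fibSkipSum (k + 2 * t) t + F k := Nat.lt_add_of_pos_right (F_pos k)
    _ = ∑ i ∈ range (t + 1), F (k + 2 * i) := (sum_range_F_eq_fibSkipSum_add k t).symm

end ZeckendorfDigits

end digits

namespace IsZeckendorf

variable {a : ℕ → ℕ → ℕ} (ha : IsZeckendorf a)
include ha

lemma zeckendorfDigits (m : ℕ) : ZeckendorfDigits (a m) := ⟨(ha m).2.1, (ha m).2.2.1⟩

lemma digitValue_eq {m N : ℕ} (h : m ≤ N) : digitValue (a m) N = m :=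
  (digitValue_eq_of_eq_zero h fun j hj _ => (ha m).2.2.2.1 j hj).trans (ha m).2.2.2.2.symm

lemma digitCount_eq {m N : ℕ} (h : m ≤ N) : digitCount (a m) N = s a m :=
  digitCount_eq_of_eq_zero h fun j hj _ => (ha m).2.2.2.1 j hj

lemma digitValue_eq_and_digitCount_eq_of_lt_F {m n : ℕ} (h : m < F (n + 1)) :
    digitValue (a m) n = m ∧ digitCount (a m) n = s a m := by
  obtain ⟨hval, hcnt⟩ := digitValue_eq_and_digitCount_eq_of_lt (Nat.le_add_left n m)
    (by rwa [ha.digitValue_eq (Nat.le_add_right m n)])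
  exact ⟨hval ▸ ha.digitValue_eq (Nat.le_add_right m n),
    hcnt ▸ ha.digitCount_eq (Nat.le_add_right m n)⟩

end IsZeckendorf

theorem many_summands_above_tail_sum_general
    (a : ℕ → ℕ → ℕ) (ha : IsZeckendorf a)
    (n k : ℕ) (hkn : k ≤ n) (hpar : n % 2 = k % 2) :
    (∀ y : ℕ, (∑ i ∈ Finset.range ((n - k) / 2 + 1), F (k + 2 * i)) ≤ y →
      y < F (n + 1) → (n - k) / 2 + 1 ≤ s a y) ∧
    (3 ≤ n → ∀ m : ℕ,
      F (2 * n) + (∑ i ∈ Finset.range ((n - k) / 2 + 1), F (k + 2 * i)) ≤ m →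
      m < F (2 * n) + F (n + 1) → (n - k) / 2 + 2 ≤ s a m) := by
  obtain ⟨t, rfl⟩ : ∃ t, n = k + 2 * t := ⟨(n - k) / 2, by omega⟩
  rw [show (k + 2 * t - k) / 2 = t by omega]
  refine ⟨fun y hy₁ hy₂ => ?_, fun hn m hm₁ hm₂ => ?_⟩
  · have hval := ha.digitValue_eq (le_refl y)
    rw [← ha.digitCount_eq (le_refl y)]
    exact (ha.zeckendorfDigits y).lt_digitCount_of_sum_le (by rwa [hval]) (by rwa [hval])
  · obtain ⟨M, hM⟩ : ∃ M, 2 * (k + 2 * t) = M + 2 := ⟨2 * (k + 2 * t) - 2, by omega⟩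
    rw [hM] at hm₁ hm₂
    have hb := ha.zeckendorfDigits m
    have hm_lt : m < F (M + 3) := by
      have : F (M + 3) = F (M + 1) + F (M + 2) := F_add_two (M + 1)
      have := F_mono (show k + 2 * t + 1 ≤ M + 1 by omega)
      omega
    obtain ⟨hval, hcnt⟩ := ha.digitValue_eq_and_digitCount_eq_of_lt_F hm_lt
    have htop : a m (M + 2) = 1 :=
      hb.eq_one_of_F_le_digitValue (show F (M + 2) ≤ digitValue (a m) (M + 2) by omega)
    obtain ⟨hval_low, hcnt_low⟩ := hb.digitValue_add_two_of_eq_one htop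
    have := hb.lt_digitCount_of_sum_le (N := M) (k := k) (t := t) (by omega) (by omega)
    omega

/-- integers in `[F n + F (n-2) + ⋯ + F k, F (n+1))` have at least
`(n-k)/2 + 1` Zeckendorf summands; consequently integers in
`[F (2n) + F n + F (n-2) + ⋯ + F k, F (2n) + F (n+1))` have at least `(n-k)/2 + 2`. -/
theorem many_summands_above_tail_sum
    (a : ℕ → ℕ → ℕ) (ha : IsZeckendorf a)
    (n k : ℕ) (hk : 0 < k) (hkn : k ≤ n) (hpar : n % 2 = k % 2) :
    (∀ y : ℕ, (∑ i ∈ Finset.range ((n - k) / 2 + 1), F (k + 2 * i)) ≤ y →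
      y < F (n + 1) → (n - k) / 2 + 1 ≤ s a y) ∧
    (3 ≤ n → ∀ m : ℕ,
      F (2 * n) + (∑ i ∈ Finset.range ((n - k) / 2 + 1), F (k + 2 * i)) ≤ m →
      m < F (2 * n) + F (n + 1) → (n - k) / 2 + 2 ≤ s a m) :=
  many_summands_above_tail_sum_general a ha n k hkn hpar
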